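/- arXiv:2604.15681 — 3 statements merged into one kernel-verified Lean document; each statement's English description precedes it below -/
import Mathlib

section
/- Let X and Y be finite-dimensional real Hilbert spaces, A : X → Y linear, and let x, ξ, η be square-integrable random vectors with ξ and η identically distributed, mutually independent, and independent of x. Set y = A x + ξ. Then for any measurable B : Y → X with A B(y+η) square-integrable, the risk E‖A B(y+η) − (y−η)‖² equals E‖A B(y+η) − A x‖² plus a constant independent of B (namely E‖ξ−η‖² minus a cross term that vanishes); consequently the two risks have the same minimizers over B. -/
/-!
Write `v = A B(y+η) − A x`, so that `A B(y+η) − (y−η) = v − (ξ−η)` and the risk expands as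
`E‖v‖² − 2 E⟪v, ξ−η⟫ + E‖ξ−η‖²`. Since `ξ`, `η` are i.i.d. and jointly independent of `x`, the
triple `(ξ, η, x)` has the same law as `(η, ξ, x)`; as `v` depends on `(ξ, η)` only through
`ξ + η`, this gives `E⟪v, ξ⟫ = E⟪v, η⟫`, so the cross term vanishes.
-/

open MeasureTheory ProbabilityTheory

section

variable {Ω : Type*} [MeasurableSpace Ω] {μ : Measure Ω}

theorem MeasureTheory.MemLp.integrable_inner {𝕜 E : Type*} [RCLike 𝕜] [NormedAddCommGroup E]
    [InnerProductSpace 𝕜 E] {f g : Ω → E} (hf : MemLp f 2 μ) (hg : MemLp g 2 μ) :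
    Integrable (fun ω => inner 𝕜 (f ω) (g ω)) μ :=
  (L2.integrable_inner (𝕜 := 𝕜) (hf.toLp f) (hg.toLp g)).congr <| by
    filter_upwards [hf.coeFn_toLp, hg.coeFn_toLp] with ω hfω hgω
    rw [hfω, hgω]

theorem identDistrib_prodMk_swap_of_indepFun [IsFiniteMeasure μ] {α Z : Type*}
    [MeasurableSpace α] [MeasurableSpace Z] {ξ η : Ω → α} {z : Ω → Z}
    (hid : IdentDistrib ξ η μ μ) (hξη : ξ ⟂ᵢ[μ] η) (hz : AEMeasurable z μ)
    (hindep : (fun ω => (ξ ω, η ω)) ⟂ᵢ[μ] z) :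
    IdentDistrib (fun ω => ((ξ ω, η ω), z ω)) (fun ω => ((η ω, ξ ω), z ω)) μ μ :=
  (hid.prodMk hid.symm hξη hξη.symm).prodMk (.refl hz) hindep
    (hindep.comp measurable_swap measurable_id)

variable {E : Type*} [NormedAddCommGroup E] [InnerProductSpace ℝ E]

theorem integral_norm_sub_sq_of_integral_inner_eq_zero {f g : Ω → E}
    (hf : MemLp f 2 μ) (hg : MemLp g 2 μ) (h : ∫ ω, inner ℝ (f ω) (g ω) ∂μ = 0) :
    ∫ ω, ‖f ω - g ω‖ ^ 2 ∂μ = ∫ ω, ‖f ω‖ ^ 2 ∂μ + ∫ ω, ‖g ω‖ ^ 2 ∂μ := by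
  have hf2 := hf.norm.integrable_sq
  have hfg := (hf.integrable_inner (𝕜 := ℝ) hg).const_mul 2
  simp_rw [norm_sub_sq_real]
  rw [integral_add (f := fun ω => ‖f ω‖ ^ 2 - 2 * inner ℝ (f ω) (g ω)) (hf2.sub hfg)
    hg.norm.integrable_sq, integral_sub hf2 hfg,
    integral_const_mul, h, mul_zero, sub_zero]

theorem integral_inner_sub_eq_zero_of_identDistrib_swap [MeasurableSpace E] [BorelSpace E]
    [SecondCountableTopology E] {Z : Type*} [MeasurableSpace Z]
    {ξ η : Ω → E} {z : Ω → Z} {φ : (E × E) × Z → E} (hφ : Measurable φ)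
    (hφ_symm : ∀ a b c, φ ((a, b), c) = φ ((b, a), c))
    (hswap : IdentDistrib (fun ω => ((ξ ω, η ω), z ω)) (fun ω => ((η ω, ξ ω), z ω)) μ μ)
    (hφL2 : MemLp (fun ω => φ ((ξ ω, η ω), z ω)) 2 μ) (hξ : MemLp ξ 2 μ) (hη : MemLp η 2 μ) :
    ∫ ω, inner ℝ (φ ((ξ ω, η ω), z ω)) (ξ ω - η ω) ∂μ = 0 := by
  have hsame : ∫ ω, inner ℝ (φ ((ξ ω, η ω), z ω)) (ξ ω) ∂μ
      = ∫ ω, inner ℝ (φ ((ξ ω, η ω), z ω)) (η ω) ∂μ := by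
    have := (hswap.comp (u := fun p => inner ℝ (φ p) p.1.1) (by fun_prop)).integral_eq
    simpa only [Function.comp_def, ← hφ_symm] using this
  simp_rw [inner_sub_right]
  rw [integral_sub (hφL2.integrable_inner hξ) (hφL2.integrable_inner hη), hsame, sub_self]

end

theorem noisier2inverse_risk_identity_general
    {Ω : Type*} [MeasurableSpace Ω] (μ : Measure Ω) [IsProbabilityMeasure μ]
    {X Y : Type*}
    [NormedAddCommGroup X] [InnerProductSpace ℝ X] [FiniteDimensional ℝ X]
    [MeasurableSpace X] [BorelSpace X]
    [NormedAddCommGroup Y] [InnerProductSpace ℝ Y] [FiniteDimensional ℝ Y]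
    [MeasurableSpace Y] [BorelSpace Y]
    (A : X →ₗ[ℝ] Y)
    (x : Ω → X) (ξ η : Ω → Y)
    (hx : MemLp x 2 μ) (hξ : MemLp ξ 2 μ) (hη : MemLp η 2 μ)
    (hid : IdentDistrib ξ η μ μ)
    (hξη : IndepFun ξ η μ)
    (hpair_x : IndepFun (fun ω => (ξ ω, η ω)) x μ)
    (y : Ω → Y) (hy : y = fun ω => A (x ω) + ξ ω) :
    ∃ c : ℝ,
      (c = (∫ ω, ‖ξ ω - η ω‖ ^ 2 ∂μ)) ∧
      ∀ B : Y → X, Measurable B →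
        MemLp (fun ω => A (B (y ω + η ω))) 2 μ →
        (∫ ω, ‖A (B (y ω + η ω)) - (y ω - η ω)‖ ^ 2 ∂μ)
          = (∫ ω, ‖A (B (y ω + η ω)) - A (x ω)‖ ^ 2 ∂μ) + c := by
  subst hy
  refine ⟨_, rfl, fun B hB hABL2 => ?_⟩
  have hA : Measurable A := A.continuous_of_finiteDimensional.measurable
  set φ : (Y × Y) × X → Y := fun p => A (B (A p.2 + p.1.1 + p.1.2)) - A p.2
  have hφL2 : MemLp (fun ω => φ ((ξ ω, η ω), x ω)) 2 μ :=
    hABL2.sub (A.toContinuousLinearMap.comp_memLp' hx)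
  have hcross := integral_inner_sub_eq_zero_of_identDistrib_swap (φ := φ) (by fun_prop)
    (fun a b c => by simp only [φ, add_right_comm])
    (identDistrib_prodMk_swap_of_indepFun hid hξη hx.aestronglyMeasurable.aemeasurable hpair_x)
    hφL2 hξ hη
  convert integral_norm_sub_sq_of_integral_inner_eq_zero hφL2 (hξ.sub hη) hcross using 4 with ω
  · simp only [φ, Pi.sub_apply]
    congr 1
    abel
  · rfl

/-- **Noisier2Inverse risk identity.** For finite-dimensional real Hilbert spaces `X`, `Y`,
a linear map `A : X → Y`, square-integrable random vectors `x`, `ξ`, `η` with `ξ`, `η`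
identically distributed, independent of each other and of `x`, and data `y = A x + ξ`,
the noisier risk `E‖A B(y+η) − (y−η)‖²` equals the supervised `Y`-space risk
`E‖A B(y+η) − A x‖²` plus a constant independent of `B`; hence the two risks have the
same minimizers. -/
theorem noisier2inverse_risk_identity
    {Ω : Type*} [MeasurableSpace Ω] (μ : Measure Ω) [IsProbabilityMeasure μ]
    {X Y : Type*}
    [NormedAddCommGroup X] [InnerProductSpace ℝ X] [FiniteDimensional ℝ X]
    [MeasurableSpace X] [BorelSpace X]
    [NormedAddCommGroup Y] [InnerProductSpace ℝ Y] [FiniteDimensional ℝ Y]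
    [MeasurableSpace Y] [BorelSpace Y]
    (A : X →ₗ[ℝ] Y)
    (x : Ω → X) (ξ η : Ω → Y)
    (hx : MemLp x 2 μ) (hξ : MemLp ξ 2 μ) (hη : MemLp η 2 μ)
    (hxm : Measurable x) (hξm : Measurable ξ) (hηm : Measurable η)
    (hid : IdentDistrib ξ η μ μ)
    (hξη : IndepFun ξ η μ)
    (hpair_x : IndepFun (fun ω => (ξ ω, η ω)) x μ)
    (y : Ω → Y) (hy : y = fun ω => A (x ω) + ξ ω) :
    ∃ c : ℝ,
      (c = (∫ ω, ‖ξ ω - η ω‖ ^ 2 ∂μ)) ∧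
      ∀ B : Y → X, Measurable B →
        MemLp (fun ω => A (B (y ω + η ω))) 2 μ →
        (∫ ω, ‖A (B (y ω + η ω)) - (y ω - η ω)‖ ^ 2 ∂μ)
          = (∫ ω, ‖A (B (y ω + η ω)) - A (x ω)‖ ^ 2 ∂μ) + c :=
  noisier2inverse_risk_identity_general μ A x ξ η hx hξ hη hid hξη hpair_x y hy
end

section
/- Under the hypotheses of the Noisier2Inverse theorem (ξ, η i.i.d., independent of x), whenever ξ and η are i.i.d. and integrable and independent of x, one has E[(ξ − η) | y + η] = 0, i.e., the conditional expectation of ξ − η given A x + ξ + η equals zero. -/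
open MeasureTheory ProbabilityTheory

/-- **Key conditional-expectation identity for Noisier2Inverse.** If `ξ` and `η` are i.i.d.
integrable random vectors, independent of `x`, and `y = A x + ξ`, then the conditional
expectation of `ξ − η` given the noisier data `y + η = A x + ξ + η` vanishes almost surely. -/
theorem condexp_noise_difference_eq_zero
    {Ω : Type*} [MeasurableSpace Ω] (μ : Measure Ω) [IsProbabilityMeasure μ]
    {X Y : Type*}
    [NormedAddCommGroup X] [InnerProductSpace ℝ X] [FiniteDimensional ℝ X]
    [MeasurableSpace X] [BorelSpace X]
    [NormedAddCommGroup Y] [InnerProductSpace ℝ Y] [FiniteDimensional ℝ Y]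
    [MeasurableSpace Y] [BorelSpace Y]
    (A : X →ₗ[ℝ] Y)
    (x : Ω → X) (ξ η : Ω → Y)
    (hx : Integrable x μ) (hξ : Integrable ξ μ) (hη : Integrable η μ)
    (hxm : Measurable x) (hξm : Measurable ξ) (hηm : Measurable η)
    (hid : IdentDistrib ξ η μ μ)
    (hξη : IndepFun ξ η μ)
    (hpair_x : IndepFun (fun ω => (ξ ω, η ω)) x μ) :
    μ[(fun ω => ξ ω - η ω) |
        MeasurableSpace.comap (fun ω => A (x ω) + ξ ω + η ω) inferInstance]
      =ᵐ[μ] 0 := by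
  have hAc : Continuous A := A.continuous_of_finiteDimensional
  have hAm : Measurable (fun ω => A (x ω)) := hAc.measurable.comp hxm
  set f : Ω → Y := fun ω => A (x ω) + ξ ω + η ω with hf_def
  have hfm : Measurable f := (hAm.add hξm).add hηm
  have hm : MeasurableSpace.comap f inferInstance ≤ ‹MeasurableSpace Ω› := hfm.comap_le
  -- identical distribution of (x, ξ, η) and (x, η, ξ)
  have hmapξη : μ.map (fun ω => (ξ ω, η ω)) = (μ.map ξ).prod (μ.map η) :=
    (indepFun_iff_map_prod_eq_prod_map_map hξm.aemeasurable hηm.aemeasurable).mp hξη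
  have hmapηξ : μ.map (fun ω => (η ω, ξ ω)) = (μ.map η).prod (μ.map ξ) :=
    (indepFun_iff_map_prod_eq_prod_map_map hηm.aemeasurable hξm.aemeasurable).mp hξη.symm
  have hlaw : μ.map ξ = μ.map η := hid.map_eq
  have hpair_eq : μ.map (fun ω => (ξ ω, η ω)) = μ.map (fun ω => (η ω, ξ ω)) := by
    rw [hmapξη, hmapηξ, hlaw]
  have hpair_x' : IndepFun (fun ω => (η ω, ξ ω)) x μ := by
    have := hpair_x.comp (measurable_swap : Measurable (Prod.swap : Y × Y → Y × Y))
      (measurable_id : Measurable (id : X → X))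
    exact this
  have hΨ : μ.map (fun ω => ((ξ ω, η ω), x ω)) = μ.map (fun ω => ((η ω, ξ ω), x ω)) := by
    rw [(indepFun_iff_map_prod_eq_prod_map_map ((hξm.prodMk hηm).aemeasurable)
        hxm.aemeasurable).mp hpair_x,
      (indepFun_iff_map_prod_eq_prod_map_map ((hηm.prodMk hξm).aemeasurable)
        hxm.aemeasurable).mp hpair_x', hpair_eq]
  have hident : IdentDistrib (fun ω => (x ω, ξ ω, η ω)) (fun ω => (x ω, η ω, ξ ω)) μ μ := by
    refine ⟨(hxm.prodMk (hξm.prodMk hηm)).aemeasurable,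
      (hxm.prodMk (hηm.prodMk hξm)).aemeasurable, ?_⟩
    have h1 : (fun ω => (x ω, ξ ω, η ω))
        = (Prod.swap : (Y × Y) × X → X × (Y × Y)) ∘ (fun ω => ((ξ ω, η ω), x ω)) := rfl
    have h2 : (fun ω => (x ω, η ω, ξ ω))
        = (Prod.swap : (Y × Y) × X → X × (Y × Y)) ∘ (fun ω => ((η ω, ξ ω), x ω)) := rfl
    rw [h1, h2, ← Measure.map_map measurable_swap ((hξm.prodMk hηm).prodMk hxm),
      ← Measure.map_map measurable_swap ((hηm.prodMk hξm).prodMk hxm), hΨ]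
  -- main: apply uniqueness of condexp with g = 0
  haveI : SigmaFinite (μ.trim hm) := by
    have : IsFiniteMeasure (μ.trim hm) := isFiniteMeasure_trim hm
    infer_instance
  have hint : Integrable (fun ω => ξ ω - η ω) μ := hξ.sub hη
  have key : (0 : Ω → Y) =ᵐ[μ]
      μ[(fun ω => ξ ω - η ω) | MeasurableSpace.comap f inferInstance] := by
    refine ae_eq_condExp_of_forall_setIntegral_eq hm hint
      (fun s _ _ => integrableOn_zero) (fun s hs _ => ?_)
      (@stronglyMeasurable_zero _ _ (MeasurableSpace.comap f inferInstance) _ _).aestronglyMeasurable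
    obtain ⟨T, hT, rfl⟩ := hs
    have hsmeas : MeasurableSet (f ⁻¹' T) := hfm hT
    -- define G on X × Y × Y
    set G : X × Y × Y → Y := fun p =>
      (T.indicator (fun _ => (1 : ℝ)) (A p.1 + p.2.1 + p.2.2)) • (p.2.1 - p.2.2) with hG_def
    have hargm : Measurable (fun p : X × Y × Y => A p.1 + p.2.1 + p.2.2) :=
      ((hAc.measurable.comp measurable_fst).add (measurable_fst.comp measurable_snd)).add
        (measurable_snd.comp measurable_snd)
    have hGm : Measurable G := by
      exact ((measurable_const.indicator hT).comp hargm).smul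
        ((measurable_fst.comp measurable_snd).sub (measurable_snd.comp measurable_snd))
    have hI : ∫ ω in (f ⁻¹' T), (ξ ω - η ω) ∂μ
        = ∫ ω, G (x ω, ξ ω, η ω) ∂μ := by
      rw [← integral_indicator hsmeas]
      congr 1
      ext ω
      by_cases hω : f ω ∈ T
      · have hω' : A (x ω) + ξ ω + η ω ∈ T := hω
        rw [Set.indicator_of_mem (show ω ∈ f ⁻¹' T from hω)]
        simp only [hG_def, Set.indicator_of_mem hω', one_smul]
      · have hω' : A (x ω) + ξ ω + η ω ∉ T := hω
        rw [Set.indicator_of_notMem (show ω ∉ f ⁻¹' T from hω)]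
        simp only [hG_def, Set.indicator_of_notMem hω', zero_smul]
    have hswap : ∫ ω, G (x ω, ξ ω, η ω) ∂μ = ∫ ω, G (x ω, η ω, ξ ω) ∂μ :=
      (hident.comp hGm).integral_eq
    have hneg : ∀ ω, G (x ω, η ω, ξ ω) = - G (x ω, ξ ω, η ω) := by
      intro ω
      simp only [hG_def]
      rw [add_right_comm (A (x ω)) (η ω) (ξ ω), ← neg_sub (ξ ω) (η ω), smul_neg]
    have hIneg : ∫ ω, G (x ω, ξ ω, η ω) ∂μ = - ∫ ω, G (x ω, ξ ω, η ω) ∂μ := by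
      refine hswap.trans ?_
      simp_rw [hneg]
      exact integral_neg _
    have hsum : (∫ ω, G (x ω, ξ ω, η ω) ∂μ) + (∫ ω, G (x ω, ξ ω, η ω) ∂μ) = 0 := by
      nth_rewrite 1 [hIneg]
      abel
    have hzero : ∫ ω, G (x ω, ξ ω, η ω) ∂μ = 0 := by
      have h2 : (2 : ℝ) • ∫ ω, G (x ω, ξ ω, η ω) ∂μ = 0 := by
        rw [two_smul]; exact hsum
      rcases smul_eq_zero.mp h2 with h | h
      · norm_num at h
      · exact h
    simp [hI, hzero]
  exact key.symm
end

section
/- For a periodized discrete Gaussian kernel h on ℤ/Nℤ, h_j ∝ Σ_{k∈ℤ} exp(−(j+kN)²/(2σ²)) normalized to sum to 1, all DFT coefficients are real and strictly positive; hence the circulant convolution operator with kernel h is symmetric positive definite and in particular invertible. -/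
open Real Complex

noncomputable section

/-- Discrete Fourier transform of `x : ℝ^N` (indices mod `N`). -/
def dft {N : ℕ} [NeZero N] (x : ZMod N → ℝ) (m : ZMod N) : ℂ :=
  ∑ j : ZMod N, (x j : ℂ) * Complex.exp (-2 * π * Complex.I * (j.val * m.val) / N)

/-- Discrete circular convolution with kernel `h`. -/
def circConv {N : ℕ} [NeZero N] (h x : ZMod N → ℝ) (j : ZMod N) : ℝ :=
  ∑ k : ZMod N, h (j - k) * x k

/-- The unnormalized periodized (wrapped) discrete Gaussian on `ℤ/Nℤ`. -/
def wrappedGauss (N : ℕ) [NeZero N] (σ : ℝ) (j : ZMod N) : ℝ :=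
  ∑' k : ℤ, Real.exp (-((j.val : ℝ) + k * N) ^ 2 / (2 * σ ^ 2))

/-- The periodized discrete Gaussian kernel, normalized to sum to `1`. -/
def gaussKernel (N : ℕ) [NeZero N] (σ : ℝ) (j : ZMod N) : ℝ :=
  wrappedGauss N σ j / ∑ i : ZMod N, wrappedGauss N σ i

/-! Wrapping a summable `f : ℤ → ℂ` around `ℤ/Nℤ` turns its DFT at `m` into the Fourier series
`∑ₙ f n e^{-2πinm/N}`; for the Gaussian, Poisson summation rewrites this as a sum of Gaussians,
which is real and positive (`0 < z` in `ComplexOrder`). For a kernel `h` with such a symbol `ĥ`,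
Parseval gives `⟨x, h ∗ y⟩ = N⁻¹ ∑ₘ ĥ m · conj (x̂ m) · ŷ m`, a symmetric positive definite form;
the circulant matrix of `h` is then injective, hence invertible. -/

open scoped ZMod ComplexOrder ComplexConjugate
open Finset

variable {N : ℕ} [NeZero N]

lemma dft_eq_zmod_dft (x : ZMod N → ℝ) (m : ZMod N) : dft x m = 𝓕 (ofReal ∘ x) m := by
  simp only [dft, ZMod.dft_apply, smul_eq_mul, Function.comp_apply]
  refine sum_congr rfl fun j _ => ?_
  rw [mul_comm, show -(j * m) = ((-(j.val * m.val : ℕ) : ℤ) : ZMod N) by simp,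
    ZMod.stdAddChar_coe]
  congr 2
  push_cast
  ring

lemma sum_conj_mul_conv_eq_sum_dft (h x y : ZMod N → ℂ) :
    ∑ j, conj (x j) * ∑ k, h (j - k) * y k
      = (N : ℂ)⁻¹ * ∑ m, 𝓕 h m * (conj (𝓕 x m) * 𝓕 y m) := by
  have h_inv (j k : ZMod N) : h (j - k) =
      (N : ℂ)⁻¹ * ∑ m, ZMod.stdAddChar (j * m) * ZMod.stdAddChar (-(k * m)) * 𝓕 h m := by
    conv_lhs => rw [← (ZMod.dft (E := ℂ)).symm_apply_apply h, ZMod.invDFT_apply]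
    simp only [smul_eq_mul, ← AddChar.map_add_eq_mul]
    congr! 3 with m
    ring_nf
  have h_conj (m : ZMod N) : conj (𝓕 x m) = ∑ j, ZMod.stdAddChar (j * m) * conj (x j) := by
    simp only [ZMod.dft_apply, smul_eq_mul, map_sum, map_mul, ← AddChar.map_neg_eq_conj, neg_neg]
  simp only [h_inv, h_conj, ZMod.dft_apply (Φ := y), smul_eq_mul, mul_sum, sum_mul]
  calc _ = ∑ k, ∑ j, ∑ m, _ := sum_comm
    _ = ∑ k, ∑ m, ∑ j, _ := sum_congr rfl fun k _ => sum_comm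
    _ = ∑ m, ∑ k, ∑ j, _ := sum_comm
  refine sum_congr rfl fun m _ => sum_congr rfl fun k _ => sum_congr rfl fun j _ => ?_
  ring

lemma ofReal_sum_mul_circConv (h x y : ZMod N → ℝ) :
    ((∑ j, x j * circConv h y j : ℝ) : ℂ) = (N : ℂ)⁻¹ *
      ∑ m, 𝓕 (ofReal ∘ h) m * (conj (𝓕 (ofReal ∘ x) m) * 𝓕 (ofReal ∘ y) m) := by
  rw [← sum_conj_mul_conv_eq_sum_dft]
  push_cast [circConv]
  simp only [Function.comp_apply, conj_ofReal]

lemma sum_mul_circConv_comm {h : ZMod N → ℝ} (hh : ∀ m, (𝓕 (ofReal ∘ h) m).im = 0)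
    (x y : ZMod N → ℝ) : ∑ j, x j * circConv h y j = ∑ j, y j * circConv h x j := by
  apply ofReal_injective
  rw [← conj_ofReal, ofReal_sum_mul_circConv, ofReal_sum_mul_circConv]
  simp only [map_mul, map_sum, map_inv₀, map_natCast, conj_conj, conj_eq_iff_im.2 (hh _)]
  congr! 2 with m
  ring

lemma sum_mul_circConv_self_pos {h : ZMod N → ℝ} (hh : ∀ m, 0 < 𝓕 (ofReal ∘ h) m)
    {x : ZMod N → ℝ} (hx : x ≠ 0) : 0 < ∑ j, x j * circConv h x j := by
  obtain ⟨m, hm⟩ : ∃ m, 𝓕 (ofReal ∘ x) m ≠ 0 := by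
    by_contra! h0
    refine hx (funext fun j => ofReal_injective ?_)
    simpa using congrFun (ZMod.dft.injective (funext h0 |>.trans (map_zero _).symm)) j
  rw [← zero_lt_real, ofReal_sum_mul_circConv]
  refine mul_pos (by simp [NeZero.pos N]) (sum_pos' (fun m _ => ?_) ⟨m, mem_univ m, ?_⟩)
  · exact mul_nonneg (hh m).le (star_mul_self_nonneg _)
  · exact mul_pos (hh m) (star_mul_self_pos (IsRegular.of_ne_zero hm))

lemma circConv_bijective {h : ZMod N → ℝ} (hh : ∀ x ≠ 0, 0 < ∑ j, x j * circConv h x j) :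
    Function.Bijective (circConv h) := by
  have h_eq : circConv h = (Matrix.circulant h).mulVec := rfl
  have h_inj : Function.Injective (Matrix.circulant h).mulVecLin := by
    refine (injective_iff_map_eq_zero _).2 fun x hx => by_contra fun hx0 => ?_
    have hx' : circConv h x = 0 := hx
    simpa [hx'] using hh x hx0
  rw [h_eq]
  exact ⟨h_inj, Matrix.mulVec_surjective_iff_isUnit.2 (Matrix.mulVec_injective_iff_isUnit.1 h_inj)⟩

def zmodProdIntEquiv (N : ℕ) [NeZero N] : ZMod N × ℤ ≃ ℤ where
  toFun p := p.1.val + p.2 * N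
  invFun n := (n, n / N)
  left_inv := fun ⟨j, k⟩ => by
    have hN : (N : ℤ) ≠ 0 := by exact_mod_cast NeZero.ne N
    have hj : (j.val : ℤ) < N := by exact_mod_cast ZMod.val_lt j
    refine Prod.ext (by simp) ?_
    simp only [Int.add_mul_ediv_right _ _ hN, Int.ediv_eq_zero_of_lt (Int.natCast_nonneg _) hj,
      zero_add]
  right_inv n := by
    simp only [ZMod.val_intCast, mul_comm (n / (N : ℤ))]
    exact Int.emod_add_mul_ediv n N

lemma intCast_zmodProdIntEquiv (p : ZMod N × ℤ) : ((zmodProdIntEquiv N p : ℤ) : ZMod N) = p.1 := by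
  simp [zmodProdIntEquiv]

lemma zmod_dft_periodization {f : ℤ → ℂ} (hf : Summable f) (m : ZMod N) :
    𝓕 (fun j : ZMod N => ∑' k : ℤ, f (j.val + k * N)) m
      = ∑' n : ℤ, ZMod.stdAddChar (-((n : ZMod N) * m)) * f n := by
  set g : ℤ → ℂ := fun n => ZMod.stdAddChar (-((n : ZMod N) * m)) * f n
  have hg : Summable (g ∘ zmodProdIntEquiv N) :=
    (zmodProdIntEquiv N).summable_iff.2 <| .of_norm_bounded (summable_norm_iff.2 hf)
      fun n => by simp [g, AddChar.norm_apply]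
  calc 𝓕 (fun j : ZMod N => ∑' k : ℤ, f (j.val + k * N)) m
      = ∑ j, ∑' k, g (zmodProdIntEquiv N (j, k)) := by
        simp only [ZMod.dft_apply, smul_eq_mul, ← tsum_mul_left, g, intCast_zmodProdIntEquiv]
        rfl
    _ = ∑' p, g (zmodProdIntEquiv N p) :=
        (tsum_fintype _).symm.trans (hg.tsum_prod' fun j => hg.prod_factor j).symm
    _ = ∑' n, g n := (zmodProdIntEquiv N).tsum_eq g

lemma summable_exp_neg_mul_add_sq {b : ℝ} (hb : 0 < b) (t : ℝ) :
    Summable fun n : ℤ => rexp (-π * b * (n + t) ^ 2) :=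
  (HurwitzKernelBounds.summable_f_int 0 t hb).congr fun n => by
    simp [HurwitzKernelBounds.f_int, mul_right_comm _ b]

/-- Poisson summation turns this Fourier series of a Gaussian into a sum of Gaussians. -/
lemma tsum_exp_neg_quadratic_pos {b : ℝ} (hb : 0 < b) (t : ℝ) :
    0 < ∑' n : ℤ, cexp (-π * b * n ^ 2 - 2 * π * I * t * n) := by
  have h_sqrt : (b : ℂ) ^ (1 / 2 : ℂ) = ((b ^ (1 / 2 : ℝ) : ℝ) : ℂ) := by
    rw [ofReal_cpow hb.le]; norm_num
  have h_terms (n : ℤ) : cexp (-π / b * (n + I * (-I * t)) ^ 2)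
      = (rexp (-π * b⁻¹ * (n + t) ^ 2) : ℂ) := by
    rw [ofReal_exp, ← mul_assoc, mul_neg, I_mul_I]
    push_cast
    ring_nf
  calc (0 : ℂ) < ((b ^ (1 / 2 : ℝ))⁻¹ * ∑' n : ℤ, rexp (-π * b⁻¹ * (n + t) ^ 2) : ℝ) :=
        zero_lt_real.2 <| mul_pos (by positivity) <|
          (summable_exp_neg_mul_add_sq (inv_pos.2 hb) t).tsum_pos (fun _ => (exp_pos _).le) 0
            (exp_pos _)
    _ = 1 / (b : ℂ) ^ (1 / 2 : ℂ) * ∑' n : ℤ, cexp (-π / b * (n + I * (-I * t)) ^ 2) := by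
        rw [h_sqrt, tsum_congr h_terms, ← ofReal_tsum]
        push_cast
        ring
    _ = ∑' n : ℤ, cexp (-π * b * n ^ 2 + 2 * π * (-I * t) * n) :=
        (Complex.tsum_exp_neg_quadratic (by simpa) _).symm
    _ = ∑' n : ℤ, cexp (-π * b * n ^ 2 - 2 * π * I * t * n) := by
        congr! 3 with n
        ring

lemma zmod_dft_wrappedGauss_pos {σ : ℝ} (hσ : 0 < σ) (m : ZMod N) :
    0 < 𝓕 (ofReal ∘ wrappedGauss N σ) m := by
  set b := (2 * π * σ ^ 2)⁻¹
  have hb : 0 < b := by positivity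
  have h_gauss (x : ℝ) : -x ^ 2 / (2 * σ ^ 2) = -π * b * x ^ 2 := by
    simp only [b]
    field_simp
  have h_wrap : ofReal ∘ wrappedGauss N σ = fun j : ZMod N =>
      ∑' k : ℤ, ((rexp (-π * b * ((j.val + k * N : ℤ) : ℝ) ^ 2) : ℝ) : ℂ) := by
    ext j
    simp only [Function.comp_apply, wrappedGauss, ofReal_tsum, h_gauss]
    push_cast
    rfl
  have h_sum : Summable fun n : ℤ => ((rexp (-π * b * (n : ℝ) ^ 2) : ℝ) : ℂ) :=
    summable_ofReal.2 (by simpa using summable_exp_neg_mul_add_sq hb 0)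
  rw [h_wrap, zmod_dft_periodization h_sum]
  convert tsum_exp_neg_quadratic_pos hb (m.val / N) using 3 with n
  rw [show -((n : ZMod N) * m) = ((-(n * m.val) : ℤ) : ZMod N) by simp, ZMod.stdAddChar_coe,
    ofReal_exp, ← Complex.exp_add]
  congr 1
  push_cast
  ring

lemma zmod_dft_gaussKernel_pos {σ : ℝ} (hσ : 0 < σ) (m : ZMod N) :
    0 < 𝓕 (ofReal ∘ gaussKernel N σ) m := by
  set G := 𝓕 (ofReal ∘ wrappedGauss N σ)
  have h_norm : ofReal ∘ gaussKernel N σ = (G 0)⁻¹ • ofReal ∘ wrappedGauss N σ := by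
    ext j
    simp [G, gaussKernel, ZMod.dft_apply_zero, div_eq_inv_mul]
  rw [h_norm, map_smul, Pi.smul_apply, smul_eq_mul]
  exact mul_pos (inv_pos.2 (zmod_dft_wrappedGauss_pos hσ 0)) (zmod_dft_wrappedGauss_pos hσ m)

/-- **Positivity of the DFT of the periodized Gaussian.** All DFT coefficients of the
periodized discrete Gaussian kernel are real and strictly positive; hence the circulant
convolution operator with this kernel is symmetric positive definite, and in particular
invertible. -/
theorem gaussKernel_dft_pos (N : ℕ) [NeZero N] (σ : ℝ) (hσ : 0 < σ) :
    (∀ m : ZMod N, (dft (gaussKernel N σ) m).im = 0 ∧ 0 < (dft (gaussKernel N σ) m).re) ∧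
    (∀ x y : ZMod N → ℝ,
        (∑ j, x j * circConv (gaussKernel N σ) y j)
          = ∑ j, y j * circConv (gaussKernel N σ) x j) ∧
    (∀ x : ZMod N → ℝ, x ≠ 0 → 0 < ∑ j, x j * circConv (gaussKernel N σ) x j) ∧
    Function.Bijective (fun x : ZMod N → ℝ => circConv (gaussKernel N σ) x) := by
  have h_symbol := zmod_dft_gaussKernel_pos (N := N) hσ
  have h_posDef (x : ZMod N → ℝ) (hx : x ≠ 0) :
      0 < ∑ j, x j * circConv (gaussKernel N σ) x j :=
    sum_mul_circConv_self_pos h_symbol hx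
  refine ⟨fun m => ?_, sum_mul_circConv_comm fun m => (pos_iff.1 (h_symbol m)).2.symm, h_posDef,
    circConv_bijective h_posDef⟩
  obtain ⟨h_re, h_im⟩ := pos_iff.1 (h_symbol m)
  rw [dft_eq_zmod_dft]
  exact ⟨h_im.symm, h_re⟩

end
end
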